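/- Let R be a relation on a finite set X with eventual period q and period p, and let x be a recurrent point. Then Per(x) = {n ∈ ℕ⁺ : x ∈ R^(q+n)(x)} is nonempty and equals p'(x)·ℕ⁺ for some p'(x) dividing p. -/
import Mathlib


open Set Pointwise

variable {X : Type*}

def relComp (S R : Set (X × X)) : Set (X × X) :=
  {p | ∃ y, (p.1, y) ∈ R ∧ (y, p.2) ∈ S}

def relPow (R : Set (X × X)) : ℕ → Set (X × X)
  | 0 => {p | p.1 = p.2}
  | n + 1 => relComp R (relPow R n)

def relPer (R : Set (X × X)) : Set ℕ :=
  {q | 0 < q ∧ ∃ N, ∀ n ≥ N, relPow R (q + n) = relPow R n}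

def relRecurrent (R : Set (X × X)) (x : X) : Prop :=
  ∃ n, 1 ≤ n ∧ (x, x) ∈ relPow R n

lemma mem_relPow_add {R : Set (X × X)} {a b : ℕ} {u v w : X}
    (h1 : (u, v) ∈ relPow R a) (h2 : (v, w) ∈ relPow R b) :
    (u, w) ∈ relPow R (a + b) := by
  induction b generalizing w with
  | zero =>
    simp only [relPow, Set.mem_setOf_eq] at h2
    cases h2; exact h1
  | succ n ih =>
    obtain ⟨y, hy1, hy2⟩ := h2
    exact ⟨y, ih hy1, hy2⟩

lemma relPow_add (R : Set (X × X)) (a b : ℕ) :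
    relPow R (a + b) = relComp (relPow R a) (relPow R b) := by
  induction a with
  | zero =>
    ext ⟨u, w⟩
    simp only [Nat.zero_add, relComp, relPow, Set.mem_setOf_eq]
    constructor
    · intro h; exact ⟨w, h, rfl⟩
    · rintro ⟨y, hy, rfl⟩; exact hy
  | succ n ih =>
    have h : n + 1 + b = (n + b) + 1 := by omega
    rw [h]
    show relComp R (relPow R (n + b)) = _
    rw [ih]
    ext ⟨u, w⟩
    constructor
    · rintro ⟨y, ⟨z, hz1, hz2⟩, hy⟩
      exact ⟨z, hz1, y, hz2, hy⟩
    · rintro ⟨z, hz1, y, hz2, hy⟩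
      exact ⟨y, ⟨z, hz1, hz2⟩, hy⟩

theorem stmt9 [Finite X] (R : Set (X × X)) (q p : ℕ) (hq : 0 < q)
    (hev : relPow R (q + q) = relPow R q)
    (hp : 0 < p) (hPer : relPer R = {q' | 0 < q' ∧ p ∣ q'})
    (x : X) (hx : relRecurrent R x) :
    {n | 0 < n ∧ (x, x) ∈ relPow R (q + n)}.Nonempty ∧
    ∃ p' : ℕ, 0 < p' ∧ p' ∣ p ∧
      {n | 0 < n ∧ (x, x) ∈ relPow R (q + n)} = {n | 0 < n ∧ p' ∣ n} := by
  set S : Set ℕ := {n | 0 < n ∧ (x, x) ∈ relPow R (q + n)} with hS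
  -- stability: for s ≥ q, relPow (s + q) = relPow s
  have hstab : ∀ s, q ≤ s → relPow R (s + q) = relPow R s := by
    intro s hs
    obtain ⟨t, rfl⟩ := Nat.exists_eq_add_of_le hs
    have h1 : q + t + q = t + (q + q) := by omega
    have h2 : q + t = t + q := by omega
    rw [h1, relPow_add, hev, h2, relPow_add]
  -- addition closure
  have hadd : ∀ a ∈ S, ∀ b ∈ S, a + b ∈ S := by
    rintro a ⟨ha0, ha⟩ b ⟨hb0, hb⟩
    refine ⟨by omega, ?_⟩
    have := mem_relPow_add ha hb
    have he : (q + a) + (q + b) = (q + (a + b)) + q := by omega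
    rw [he, hstab _ (by omega)] at this
    exact this
  -- subtract one q
  have hsubq : ∀ m ∈ S, q < m → m - q ∈ S := by
    rintro m ⟨hm0, hm⟩ hqm
    refine ⟨by omega, ?_⟩
    have he : q + m = (q + (m - q)) + q := by omega
    rw [he, hstab _ (by omega)] at hm
    exact hm
  -- positive multiples
  have hmul : ∀ n ∈ S, ∀ k, 0 < k → k * n ∈ S := by
    intro n hn k hk
    induction k with
    | zero => omega
    | succ m ih =>
      rcases Nat.eq_zero_or_pos m with rfl | hm
      · simpa using hn
      · have := hadd _ (ih hm) _ hn
        have he : m * n + n = (m + 1) * n := by ring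
        rwa [he] at this
  -- drop k copies of q
  have hdropq : ∀ k m, 0 < m → m + k * q ∈ S → m ∈ S := by
    intro k
    induction k with
    | zero => intro m _ h; simpa using h
    | succ j ih =>
      intro m hm h
      have he : m + (j + 1) * q = (m + j * q) + q := by ring
      rw [he] at h
      have := hsubq _ h (by omega)
      simp only [Nat.add_sub_cancel] at this
      exact ih m hm this
  -- nonempty
  have hne : S.Nonempty := by
    obtain ⟨m, hm1, hm⟩ := hx
    have hmem : (x, x) ∈ relPow R (m * (q + 1)) := by
      have : ∀ k, 0 < k → (x, x) ∈ relPow R (k * m) := by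
        intro k hk
        induction k with
        | zero => omega
        | succ j ih =>
          rcases Nat.eq_zero_or_pos j with rfl | hj
          · simpa using hm
          · have := mem_relPow_add (ih hj) hm
            have he : j * m + m = (j + 1) * m := by ring
            rwa [he] at this
      have h := this (q + 1) (by omega)
      have he : (q + 1) * m = m * (q + 1) := by ring
      rwa [he] at h
    have h5 : q + 1 ≤ m * (q + 1) := Nat.le_mul_of_pos_left _ hm1
    refine ⟨m * (q + 1) - q, by omega, ?_⟩
    have he : q + (m * (q + 1) - q) = m * (q + 1) := by omega
    rwa [he]
  obtain ⟨n₀, hn₀⟩ := hne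
  have hn₀pos : 0 < n₀ := hn₀.1
  -- q ∈ S
  have hqS : q ∈ S := by
    have h1 : q * n₀ ∈ S := hmul _ hn₀ q hq
    refine hdropq (n₀ - 1) q hq ?_
    have he : q + (n₀ - 1) * q = q * n₀ := by
      obtain ⟨m, rfl⟩ := Nat.exists_eq_add_of_le hn₀pos
      simp only [Nat.add_sub_cancel_left]
      ring
    rwa [he]
  -- adding multiples of q
  have hupq : ∀ k, ∀ n ∈ S, n + k * q ∈ S := by
    intro k
    induction k with
    | zero => intro n hn; simpa using hn
    | succ j ih =>
      intro n hn
      have := hadd _ (ih n hn) _ hqS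
      have he : n + j * q + q = n + (j + 1) * q := by ring
      rwa [he] at this
  -- adding p
  have haddp : ∀ n ∈ S, n + p ∈ S := by
    intro n hn
    have hpPer : p ∈ relPer R := by
      rw [hPer]; exact ⟨hp, dvd_refl p⟩
    obtain ⟨-, N, hN⟩ := hpPer
    have h1 : n + N * q ∈ S := hupq N n hn
    have h2 : (x, x) ∈ relPow R (q + (n + N * q)) := h1.2
    have hge : q + (n + N * q) ≥ N := by
      have := Nat.le_mul_of_pos_right N hq
      omega
    have h3 := hN _ hge
    have h4 : (x, x) ∈ relPow R (p + (q + (n + N * q))) := by rw [h3]; exact h2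
    have he : p + (q + (n + N * q)) = q + ((n + p) + N * q) := by ring
    rw [he] at h4
    exact hdropq N (n + p) (by omega) ⟨by omega, h4⟩
  -- subtraction closure
  have hsub : ∀ a ∈ S, ∀ b ∈ S, b < a → a - b ∈ S := by
    intro a ha b hb hba
    have h1 : a + (q - 1) * b ∈ S := by
      rcases Nat.eq_or_lt_of_le hq with h | h
      · simpa [← h] using ha
      · exact hadd _ ha _ (hmul _ hb (q - 1) (by omega))
    refine hdropq b (a - b) (by omega) ?_
    have he : (a - b) + b * q = a + (q - 1) * b := by
      obtain ⟨c, rfl⟩ := Nat.exists_eq_add_of_le hba.le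
      obtain ⟨t, rfl⟩ := Nat.exists_eq_add_of_le hq
      simp only [Nat.add_sub_cancel_left]
      ring
    rwa [he]
  -- the gcd
  set d := sInf S with hd
  have hdS : d ∈ S := Nat.sInf_mem ⟨n₀, hn₀⟩
  have hd0 : 0 < d := hdS.1
  have hdvd : ∀ n ∈ S, d ∣ n := by
    intro n hn
    induction n using Nat.strong_induction_on with
    | _ n ih =>
      rcases lt_trichotomy n d with h | h | h
      · exact absurd (Nat.sInf_le hn) (by omega)
      · exact h ▸ dvd_refl d
      · have h1 : n - d ∈ S := hsub _ hn _ hdS h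
        have h2 : d ∣ n - d := ih _ (by omega) h1
        have : n = (n - d) + d := by omega
        rw [this]; exact Nat.dvd_add h2 (dvd_refl d)
  have hdp : d ∣ p := by
    have h1 : d ∣ q := hdvd _ hqS
    have h2 : d ∣ q + p := hdvd _ (haddp _ hqS)
    exact (Nat.dvd_add_right h1).mp h2
  refine ⟨⟨n₀, hn₀⟩, d, hd0, hdp, ?_⟩
  ext n
  simp only [Set.mem_setOf_eq]
  constructor
  · intro hn; exact ⟨hn.1, hdvd _ hn⟩
  · rintro ⟨hn0, k, rfl⟩
    have hk : 0 < k := by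
      rcases Nat.eq_zero_or_pos k with rfl | hk
      · simp at hn0
      · exact hk
    have := hmul _ hdS k hk
    rwa [Nat.mul_comm] at this
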